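/- Let 𝒴 ⊂ ℝ be a finite set, let 𝒜, 𝒢₁, 𝒢₂, ℬ₂ be finite types, let p be a strictly positive probability mass function on 𝒴 × 𝒜 × 𝒢₁ × 𝒢₂ × ℬ₂, and fix a ∈ 𝒜. If G₂ ⊥ (A, G₁) | B₂ under p, then for every (g₂, b₂): ∑_{(y,a′,g₁)} p(y,a′,g₁ | g₂,b₂) · ( ψ_a^{G₁,B₂}(y,a′,g₁,b₂) − ψ_a^{G₁,(G₂,B₂)}(y,a′,g₁,g₂,b₂) ) = 0; that is, the difference of the two influence functions has vanishing conditional expectation given (G₂, B₂). -/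

import Mathlib

open Finset

noncomputable section

variable {Y : Finset ℝ} {A G₁ G₂ B₂ : Type}
variable [Fintype A] [Fintype G₁] [Fintype G₂] [Fintype B₂] [DecidableEq A]

/-- Marginal `p(g₁)`. -/
def pG1 (p : Y × A × G₁ × G₂ × B₂ → ℝ) (g₁ : G₁) : ℝ :=
  ∑ y : Y, ∑ a : A, ∑ g₂ : G₂, ∑ b₂ : B₂, p (y, a, g₁, g₂, b₂)

/-- Marginal `p(g₂)`. -/
def pG2 (p : Y × A × G₁ × G₂ × B₂ → ℝ) (g₂ : G₂) : ℝ :=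
  ∑ y : Y, ∑ a : A, ∑ g₁ : G₁, ∑ b₂ : B₂, p (y, a, g₁, g₂, b₂)

/-- Marginal `p(b₂)`. -/
def pB2 (p : Y × A × G₁ × G₂ × B₂ → ℝ) (b₂ : B₂) : ℝ :=
  ∑ y : Y, ∑ a : A, ∑ g₁ : G₁, ∑ g₂ : G₂, p (y, a, g₁, g₂, b₂)

/-- Marginal `p(g₂, b₂)`. -/
def pG2B2 (p : Y × A × G₁ × G₂ × B₂ → ℝ) (g₂ : G₂) (b₂ : B₂) : ℝ :=
  ∑ y : Y, ∑ a : A, ∑ g₁ : G₁, p (y, a, g₁, g₂, b₂)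

/-- Marginal `p(a, g₁, b₂)`. -/
def pAG1B2 (p : Y × A × G₁ × G₂ × B₂ → ℝ) (a : A) (g₁ : G₁) (b₂ : B₂) : ℝ :=
  ∑ y : Y, ∑ g₂ : G₂, p (y, a, g₁, g₂, b₂)

/-- Marginal `p(a, g₁, g₂, b₂)`. -/
def pAG1G2B2 (p : Y × A × G₁ × G₂ × B₂ → ℝ) (a : A) (g₁ : G₁) (g₂ : G₂) (b₂ : B₂) : ℝ :=
  ∑ y : Y, p (y, a, g₁, g₂, b₂)

/-- Marginal `p(a, g₁, g₂)`. -/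
def pAG1G2 (p : Y × A × G₁ × G₂ × B₂ → ℝ) (a : A) (g₁ : G₁) (g₂ : G₂) : ℝ :=
  ∑ y : Y, ∑ b₂ : B₂, p (y, a, g₁, g₂, b₂)

/-- Outcome regression `m₁(g₁,b₂) = ∑_y y·p(y | a, g₁, b₂)` for the
adjustment set `(G₁, B₂)`. -/
def m1 (p : Y × A × G₁ × G₂ × B₂ → ℝ) (a : A) (g₁ : G₁) (b₂ : B₂) : ℝ :=
  ∑ y : Y, (y : ℝ) * ((∑ g₂ : G₂, p (y, a, g₁, g₂, b₂)) / pAG1B2 p a g₁ b₂)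

/-- Outcome regression `m₂(g₁,g₂,b₂) = ∑_y y·p(y | a, g₁, g₂, b₂)` for the
adjustment set `(G₁, (G₂, B₂))`. -/
def m2 (p : Y × A × G₁ × G₂ × B₂ → ℝ) (a : A) (g₁ : G₁) (g₂ : G₂) (b₂ : B₂) : ℝ :=
  ∑ y : Y, (y : ℝ) * (p (y, a, g₁, g₂, b₂) / pAG1G2B2 p a g₁ g₂ b₂)

/-- Outcome regression `m₃(g₁,g₂) = ∑_y y·p(y | a, g₁, g₂)` for the
adjustment set `(G₁, G₂)`. -/
def m3 (p : Y × A × G₁ × G₂ × B₂ → ℝ) (a : A) (g₁ : G₁) (g₂ : G₂) : ℝ :=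
  ∑ y : Y, (y : ℝ) * ((∑ b₂ : B₂, p (y, a, g₁, g₂, b₂)) / pAG1G2 p a g₁ g₂)

/-- Target parameter for the adjustment set `(G₁, B₂)`. -/
def T1 (p : Y × A × G₁ × G₂ × B₂ → ℝ) (a : A) : ℝ :=
  ∑ g₁ : G₁, pG1 p g₁ * ∑ b₂ : B₂, pB2 p b₂ * m1 p a g₁ b₂

/-- Target parameter for the adjustment set `(G₁, (G₂, B₂))`. -/
def T2 (p : Y × A × G₁ × G₂ × B₂ → ℝ) (a : A) : ℝ :=
  ∑ g₁ : G₁, pG1 p g₁ * ∑ g₂ : G₂, ∑ b₂ : B₂, pG2B2 p g₂ b₂ * m2 p a g₁ g₂ b₂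

/-- Target parameter for the adjustment set `(G₁, G₂)`. -/
def T3 (p : Y × A × G₁ × G₂ × B₂ → ℝ) (a : A) : ℝ :=
  ∑ g₁ : G₁, pG1 p g₁ * ∑ g₂ : G₂, pG2 p g₂ * m3 p a g₁ g₂

/-- Influence function `ψ_a^{G₁,B₂}` for the adjustment set `(G₁, B₂)`. -/
def psi1 (p : Y × A × G₁ × G₂ × B₂ → ℝ) (a : A)
    (y : Y) (a' : A) (g₁ : G₁) (b₂ : B₂) : ℝ :=
  (if a' = a then (1 : ℝ) else 0) * (pG1 p g₁ * pB2 p b₂ / pAG1B2 p a g₁ b₂) *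
      ((y : ℝ) - m1 p a g₁ b₂)
    + (∑ b₂' : B₂, pB2 p b₂' * m1 p a g₁ b₂')
    + (∑ g₁' : G₁, pG1 p g₁' * m1 p a g₁' b₂)
    - 2 * T1 p a

/-- Influence function `ψ_a^{G₁,(G₂,B₂)}` for the adjustment set `(G₁, (G₂, B₂))`. -/
def psi2 (p : Y × A × G₁ × G₂ × B₂ → ℝ) (a : A)
    (y : Y) (a' : A) (g₁ : G₁) (g₂ : G₂) (b₂ : B₂) : ℝ :=
  (if a' = a then (1 : ℝ) else 0) *
      (pG1 p g₁ * pG2B2 p g₂ b₂ / pAG1G2B2 p a g₁ g₂ b₂) *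
      ((y : ℝ) - m2 p a g₁ g₂ b₂)
    + (∑ g₂' : G₂, ∑ b₂' : B₂, pG2B2 p g₂' b₂' * m2 p a g₁ g₂' b₂')
    + (∑ g₁' : G₁, pG1 p g₁' * m2 p a g₁' g₂ b₂)
    - 2 * T2 p a

/-- Influence function `ψ_a^{G₁,G₂}` for the adjustment set `(G₁, G₂)`. -/
def psi3 (p : Y × A × G₁ × G₂ × B₂ → ℝ) (a : A)
    (y : Y) (a' : A) (g₁ : G₁) (g₂ : G₂) : ℝ :=
  (if a' = a then (1 : ℝ) else 0) * (pG1 p g₁ * pG2 p g₂ / pAG1G2 p a g₁ g₂) *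
      ((y : ℝ) - m3 p a g₁ g₂)
    + (∑ g₂' : G₂, pG2 p g₂' * m3 p a g₁ g₂')
    + (∑ g₁' : G₁, pG1 p g₁' * m3 p a g₁' g₂)
    - 2 * T3 p a

/-- Conditional independence `G₂ ⊥ (A, G₁) | B₂` under `p`. -/
def CI_G2_AG1_B2 (p : Y × A × G₁ × G₂ × B₂ → ℝ) : Prop :=
  ∀ (g₂ : G₂) (a : A) (g₁ : G₁) (b₂ : B₂),
    (∑ y : Y, p (y, a, g₁, g₂, b₂)) / pB2 p b₂ =
      (pG2B2 p g₂ b₂ / pB2 p b₂) * (pAG1B2 p a g₁ b₂ / pB2 p b₂)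

/-- Conditional independence `Y ⊥ B₂ | (A, G₁, G₂)` under `p`. -/
def CI_Y_B2_AG1G2 (p : Y × A × G₁ × G₂ × B₂ → ℝ) : Prop :=
  ∀ (y : Y) (a : A) (g₁ : G₁) (g₂ : G₂) (b₂ : B₂),
    p (y, a, g₁, g₂, b₂) / pAG1G2 p a g₁ g₂ =
      ((∑ b₂' : B₂, p (y, a, g₁, g₂, b₂')) / pAG1G2 p a g₁ g₂) *
        (pAG1G2B2 p a g₁ g₂ b₂ / pAG1G2 p a g₁ g₂)

/-- Variance of a real function of the observation under `p`. -/
def VarP (p : Y × A × G₁ × G₂ × B₂ → ℝ) (f : Y × A × G₁ × G₂ × B₂ → ℝ) : ℝ :=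
  (∑ o : Y × A × G₁ × G₂ × B₂, p o * f o ^ 2) -
    (∑ o : Y × A × G₁ × G₂ × B₂, p o * f o) ^ 2

end

/-! Conditional independence gives the factorisation
`p(a, g₁, g₂, b₂) p(b₂) = p(g₂, b₂) p(a, g₁, b₂)`, hence
`∑_{g₂} p(g₂, b₂) m₂(g₁, g₂, b₂) = p(b₂) m₁(g₁, b₂)`. This makes `T₁ = T₂` and makes the
averaged regression terms of `ψ₁` and `ψ₂` agree, so `ψ₁ - ψ₂` is the difference of the two
weighted residual terms plus the constant `∑_{g₁} p(g₁) (m₁(g₁, b₂) - m₂(g₁, g₂, b₂))`.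
Given `(g₂, b₂)` the `m₂`-residual has mean zero, while by the same factorisation the
`m₁`-residual has mean `∑_{g₁} p(g₁) (m₂ - m₁)`, which cancels the constant. -/

theorem sum_mul_sum_mul_div_sum {ι K : Type*} [Field K] (s : Finset ι) (x w : ι → K)
    (hw : ∑ i ∈ s, w i ≠ 0) :
    (∑ i ∈ s, w i) * ∑ i ∈ s, x i * (w i / ∑ j ∈ s, w j) = ∑ i ∈ s, x i * w i := by
  rw [mul_sum]
  refine sum_congr rfl fun i _ => ?_
  field_simp

theorem sum_mul_sub_eq_sum_mul_mul_div_sum_sub {ι K : Type*} [Field K] (s : Finset ι)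
    (x w : ι → K) (c : K) (hw : ∑ i ∈ s, w i ≠ 0) :
    ∑ i ∈ s, w i * (x i - c) = (∑ i ∈ s, w i) * (∑ i ∈ s, x i * (w i / ∑ j ∈ s, w j) - c) := by
  rw [mul_sub, sum_mul_sum_mul_div_sum s x w hw, sum_mul, ← sum_sub_distrib]
  exact sum_congr rfl fun i _ => by ring

variable {Y : Finset ℝ} {A G₁ G₂ B₂ : Type}

section

variable {p : Y × A × G₁ × G₂ × B₂ → ℝ}

theorem pAG1G2B2_pos [Nonempty Y] (hpos : ∀ o, 0 < p o) (a : A) (g₁ : G₁) (g₂ : G₂) (b₂ : B₂) :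
    0 < pAG1G2B2 p a g₁ g₂ b₂ :=
  sum_pos (fun _ _ => hpos _) univ_nonempty

theorem pAG1B2_pos [Fintype G₂] [Nonempty Y] [Nonempty G₂] (hpos : ∀ o, 0 < p o) (a : A)
    (g₁ : G₁) (b₂ : B₂) : 0 < pAG1B2 p a g₁ b₂ :=
  sum_pos (fun _ _ => sum_pos (fun _ _ => hpos _) univ_nonempty) univ_nonempty

theorem pG2B2_pos [Fintype A] [Fintype G₁] [Nonempty Y] [Nonempty A] [Nonempty G₁]
    (hpos : ∀ o, 0 < p o) (g₂ : G₂) (b₂ : B₂) : 0 < pG2B2 p g₂ b₂ :=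
  sum_pos (fun _ _ => sum_pos (fun _ _ => sum_pos (fun _ _ => hpos _) univ_nonempty)
    univ_nonempty) univ_nonempty

theorem pB2_pos [Fintype A] [Fintype G₁] [Fintype G₂] [Nonempty Y] [Nonempty A] [Nonempty G₁]
    [Nonempty G₂] (hpos : ∀ o, 0 < p o) (b₂ : B₂) : 0 < pB2 p b₂ :=
  sum_pos (fun _ _ => sum_pos (fun _ _ => sum_pos (fun _ _ => sum_pos (fun _ _ => hpos _)
    univ_nonempty) univ_nonempty) univ_nonempty) univ_nonempty

theorem CI_G2_AG1_B2.pAG1G2B2_mul_pB2 [Fintype A] [Fintype G₁] [Fintype G₂]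
    (hCI : CI_G2_AG1_B2 p) {b₂ : B₂} (hb₂ : pB2 p b₂ ≠ 0) (a : A) (g₁ : G₁) (g₂ : G₂) :
    pAG1G2B2 p a g₁ g₂ b₂ * pB2 p b₂ = pG2B2 p g₂ b₂ * pAG1B2 p a g₁ b₂ := by
  have h : pAG1G2B2 p a g₁ g₂ b₂ / pB2 p b₂ =
      pG2B2 p g₂ b₂ / pB2 p b₂ * (pAG1B2 p a g₁ b₂ / pB2 p b₂) := hCI g₂ a g₁ b₂
  field_simp at h
  exact mul_right_cancel₀ hb₂ (by linear_combination pB2 p b₂ * h)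

theorem pAG1G2B2_mul_m2 [Nonempty Y] (hpos : ∀ o, 0 < p o) (a : A) (g₁ : G₁) (g₂ : G₂)
    (b₂ : B₂) : pAG1G2B2 p a g₁ g₂ b₂ * m2 p a g₁ g₂ b₂ = ∑ y : Y, y * p (y, a, g₁, g₂, b₂) :=
  sum_mul_sum_mul_div_sum _ _ _ (pAG1G2B2_pos hpos a g₁ g₂ b₂).ne'

theorem pAG1B2_mul_m1 [Fintype G₂] [Nonempty Y] [Nonempty G₂] (hpos : ∀ o, 0 < p o) (a : A)
    (g₁ : G₁) (b₂ : B₂) :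
    pAG1B2 p a g₁ b₂ * m1 p a g₁ b₂ = ∑ g₂ : G₂, ∑ y : Y, y * p (y, a, g₁, g₂, b₂) := by
  rw [sum_comm]
  simp only [← mul_sum]
  exact sum_mul_sum_mul_div_sum _ _ _ (pAG1B2_pos hpos a g₁ b₂).ne'

theorem sum_mul_sub_eq_pAG1G2B2_mul_m2_sub [Nonempty Y] (hpos : ∀ o, 0 < p o) (a : A)
    (g₁ : G₁) (g₂ : G₂) (b₂ : B₂) (c : ℝ) :
    ∑ y : Y, p (y, a, g₁, g₂, b₂) * (y - c) = pAG1G2B2 p a g₁ g₂ b₂ * (m2 p a g₁ g₂ b₂ - c) :=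
  sum_mul_sub_eq_sum_mul_mul_div_sum_sub _ _ _ c (pAG1G2B2_pos hpos a g₁ g₂ b₂).ne'

theorem sum_pG2B2_mul_m2 [Fintype A] [Fintype G₁] [Fintype G₂] [Nonempty Y] [Nonempty G₂]
    (hpos : ∀ o, 0 < p o) (hCI : CI_G2_AG1_B2 p) (a : A) (g₁ : G₁) (b₂ : B₂) :
    ∑ g₂ : G₂, pG2B2 p g₂ b₂ * m2 p a g₁ g₂ b₂ = pB2 p b₂ * m1 p a g₁ b₂ := by
  have : Nonempty A := ⟨a⟩
  have : Nonempty G₁ := ⟨g₁⟩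
  have hb₂ := (pB2_pos hpos b₂).ne'
  refine mul_left_cancel₀ (pAG1B2_pos hpos a g₁ b₂).ne' ?_
  calc pAG1B2 p a g₁ b₂ * ∑ g₂ : G₂, pG2B2 p g₂ b₂ * m2 p a g₁ g₂ b₂
      = pB2 p b₂ * ∑ g₂ : G₂, pAG1G2B2 p a g₁ g₂ b₂ * m2 p a g₁ g₂ b₂ := by
        simp only [mul_sum]
        refine sum_congr rfl fun g₂ _ => ?_
        linear_combination -m2 p a g₁ g₂ b₂ * hCI.pAG1G2B2_mul_pB2 hb₂ a g₁ g₂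
    _ = pAG1B2 p a g₁ b₂ * (pB2 p b₂ * m1 p a g₁ b₂) := by
        simp only [pAG1G2B2_mul_m2 hpos, ← pAG1B2_mul_m1 hpos]
        ring

theorem T1_eq_T2 [Fintype A] [Fintype G₁] [Fintype G₂] [Fintype B₂] [Nonempty Y] [Nonempty G₂]
    (hpos : ∀ o, 0 < p o) (hCI : CI_G2_AG1_B2 p) (a : A) : T1 p a = T2 p a := by
  refine sum_congr rfl fun g₁ _ => congrArg _ ?_
  rw [sum_comm]
  exact sum_congr rfl fun b₂ _ => (sum_pG2B2_mul_m2 hpos hCI a g₁ b₂).symm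

theorem psi1_sub_psi2 [Fintype A] [Fintype G₁] [Fintype G₂] [Fintype B₂] [DecidableEq A]
    [Nonempty Y] (hpos : ∀ o, 0 < p o) (hCI : CI_G2_AG1_B2 p) (a : A) (y : Y) (a' : A)
    (g₁ : G₁) (g₂ : G₂) (b₂ : B₂) :
    psi1 p a y a' g₁ b₂ - psi2 p a y a' g₁ g₂ b₂ =
      (if a' = a then 1 else 0) * (pG1 p g₁ * pB2 p b₂ / pAG1B2 p a g₁ b₂) * (y - m1 p a g₁ b₂)
        - (if a' = a then 1 else 0) * (pG1 p g₁ * pG2B2 p g₂ b₂ / pAG1G2B2 p a g₁ g₂ b₂) *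
            (y - m2 p a g₁ g₂ b₂)
        + ∑ g₁' : G₁, pG1 p g₁' * (m1 p a g₁' b₂ - m2 p a g₁' g₂ b₂) := by
  have : Nonempty G₂ := ⟨g₂⟩
  have hm : ∑ g₂' : G₂, ∑ b₂' : B₂, pG2B2 p g₂' b₂' * m2 p a g₁ g₂' b₂' =
      ∑ b₂' : B₂, pB2 p b₂' * m1 p a g₁ b₂' := by
    rw [sum_comm]
    exact sum_congr rfl fun b₂' _ => sum_pG2B2_mul_m2 hpos hCI a g₁ b₂'
  rw [psi1, psi2, hm, T1_eq_T2 hpos hCI a]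
  simp only [mul_sub, sum_sub_distrib]
  ring

end

noncomputable def condExpG2B2 [Fintype A] [Fintype G₁] (p : Y × A × G₁ × G₂ × B₂ → ℝ) (g₂ : G₂)
    (b₂ : B₂) (f : Y → A → G₁ → ℝ) : ℝ :=
  ∑ y : Y, ∑ a' : A, ∑ g₁ : G₁, p (y, a', g₁, g₂, b₂) / pG2B2 p g₂ b₂ * f y a' g₁

section condExpG2B2

variable [Fintype A] [Fintype G₁] {p : Y × A × G₁ × G₂ × B₂ → ℝ} {g₂ : G₂} {b₂ : B₂}

theorem condExpG2B2_add (f g : Y → A → G₁ → ℝ) :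
    condExpG2B2 p g₂ b₂ (fun y a' g₁ => f y a' g₁ + g y a' g₁) =
      condExpG2B2 p g₂ b₂ f + condExpG2B2 p g₂ b₂ g := by
  simp only [condExpG2B2, mul_add, sum_add_distrib]

theorem condExpG2B2_sub (f g : Y → A → G₁ → ℝ) :
    condExpG2B2 p g₂ b₂ (fun y a' g₁ => f y a' g₁ - g y a' g₁) =
      condExpG2B2 p g₂ b₂ f - condExpG2B2 p g₂ b₂ g := by
  simp only [condExpG2B2, mul_sub, sum_sub_distrib]

theorem condExpG2B2_const (h : pG2B2 p g₂ b₂ ≠ 0) (c : ℝ) :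
    condExpG2B2 p g₂ b₂ (fun _ _ _ => c) = c := by
  simp only [condExpG2B2, ← sum_mul, ← sum_div]
  change pG2B2 p g₂ b₂ / pG2B2 p g₂ b₂ * c = c
  rw [div_self h, one_mul]

theorem condExpG2B2_ite_mul [DecidableEq A] (a : A) (w : G₁ → ℝ) (f : Y → G₁ → ℝ) :
    condExpG2B2 p g₂ b₂ (fun y a' g₁ => (if a' = a then 1 else 0) * w g₁ * f y g₁) =
      ∑ g₁ : G₁, w g₁ / pG2B2 p g₂ b₂ * ∑ y : Y, p (y, a, g₁, g₂, b₂) * f y g₁ := by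
  simp only [condExpG2B2, ite_mul, one_mul, zero_mul, mul_ite, mul_zero]
  calc _ = ∑ y : Y, ∑ g₁ : G₁, p (y, a, g₁, g₂, b₂) / pG2B2 p g₂ b₂ * (w g₁ * f y g₁) :=
        sum_congr rfl fun y _ => by rw [sum_comm]; simp only [sum_ite_eq', mem_univ, if_true]
    _ = _ := by
        rw [sum_comm]
        simp only [mul_sum]
        exact sum_congr rfl fun g₁ _ => sum_congr rfl fun y _ => by ring

end condExpG2B2

variable [Fintype A] [Fintype G₁] [Fintype G₂] [Fintype B₂] [DecidableEq A]

theorem psi_difference_condExp_G2B2_general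
    (p : Y × A × G₁ × G₂ × B₂ → ℝ)
    (hpos : ∀ o, 0 < p o) (a : A)
    (hCI : CI_G2_AG1_B2 p) :
    ∀ (g₂ : G₂) (b₂ : B₂),
      ∑ y : Y, ∑ a' : A, ∑ g₁ : G₁,
        (p (y, a', g₁, g₂, b₂) / pG2B2 p g₂ b₂) *
          (psi1 p a y a' g₁ b₂ - psi2 p a y a' g₁ g₂ b₂) = 0 := by
  intro g₂ b₂
  rcases isEmpty_or_nonempty Y with _ | _
  · simp
  rcases isEmpty_or_nonempty G₁ with _ | _
  · simp
  have : Nonempty A := ⟨a⟩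
  have : Nonempty G₂ := ⟨g₂⟩
  have hG₂B₂ := (pG2B2_pos hpos g₂ b₂).ne'
  change condExpG2B2 p g₂ b₂ (fun y a' g₁ => psi1 p a y a' g₁ b₂ - psi2 p a y a' g₁ g₂ b₂) = 0
  simp only [psi1_sub_psi2 hpos hCI, condExpG2B2_add, condExpG2B2_sub, condExpG2B2_ite_mul,
    condExpG2B2_const hG₂B₂, sum_mul_sub_eq_pAG1G2B2_mul_m2_sub hpos, sub_self, mul_zero,
    sum_const_zero, sub_zero, ← sum_add_distrib]
  refine sum_eq_zero fun g₁ _ => ?_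
  have hfac := hCI.pAG1G2B2_mul_pB2 (pB2_pos hpos b₂).ne' a g₁ g₂
  have hAG₁B₂ := (pAG1B2_pos hpos a g₁ b₂).ne'
  field_simp
  linear_combination (m2 p a g₁ g₂ b₂ - m1 p a g₁ b₂) * pG1 p g₁ * hfac

/-- First orthogonality condition in the proof of Lemma 4.1: given
`G₂ ⊥ (A, G₁) | B₂`, the difference of the two influence functions has
vanishing conditional expectation given `(G₂, B₂)`. -/
theorem psi_difference_condExp_G2B2
    (p : Y × A × G₁ × G₂ × B₂ → ℝ)
    (hpos : ∀ o, 0 < p o) (hsum : ∑ o, p o = 1) (a : A)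
    (hCI : CI_G2_AG1_B2 p) :
    ∀ (g₂ : G₂) (b₂ : B₂),
      ∑ y : Y, ∑ a' : A, ∑ g₁ : G₁,
        (p (y, a', g₁, g₂, b₂) / pG2B2 p g₂ b₂) *
          (psi1 p a y a' g₁ b₂ - psi2 p a y a' g₁ g₂ b₂) = 0 :=
  psi_difference_condExp_G2B2_general p hpos a hCI
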